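/- If G and H are finite groups of coprime orders, then μ(G × H) = μ(G) + μ(H), where μ denotes the minimal faithful permutation representation degree. -/

import Mathlib

/-!
An embedding `G × H ↪ Sym(a) × Sym(b) ↪ Sym(a + b)` gives `μ(G × H) ≤ μ(G) + μ(H)`.
Conversely, let `G × H` act faithfully on `X`. As the orders are coprime, `(g, 1)` is a power
of `(g, h)`, so a point fixed by `(g, h)` is fixed by `g`: a point `g • x` lies in the `H`-orbit
of `x` only if `g • x = x`. Hence `G` acts faithfully on the `H`-orbits it moves, and `H` on the
`G`-orbits it moves. Counting an `H`-orbit as the weight `1 / |H • x|` at each of its points, the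
two numbers of orbits add up to at most `|X|`: a point moved by both groups lies in orbits of
size at least `2` under both, so it carries weight at most `1/2 + 1/2`.
-/

open MulAction Finset

/-- `μ(G)` is the least element of `permDegrees G`. -/
def permDegrees (G : Type*) [Group G] : Set ℕ :=
  {n | ∃ f : G →* Equiv.Perm (Fin n), Function.Injective f}

section PermDegrees

variable {G H : Type*} [Group G] [Group H]

theorem natCard_mem_permDegrees (Y : Type*) [MulAction G Y] [FaithfulSMul G Y] [Finite Y] :
    Nat.card Y ∈ permDegrees G :=
  ⟨(Finite.equivFin Y).permCongrHom.toMonoidHom.comp (MulAction.toPermHom G Y),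
    (Finite.equivFin Y).permCongrHom.injective.comp MulAction.toPerm_injective⟩

theorem add_mem_permDegrees_prod {a b : ℕ} (ha : a ∈ permDegrees G) (hb : b ∈ permDegrees H) :
    a + b ∈ permDegrees (G × H) := by
  obtain ⟨f, hf⟩ := ha
  obtain ⟨g, hg⟩ := hb
  exact ⟨finSumFinEquiv.permCongrHom.toMonoidHom.comp
      ((Equiv.Perm.sumCongrHom (Fin a) (Fin b)).comp (f.prodMap g)),
    finSumFinEquiv.permCongrHom.injective.comp
      (Equiv.Perm.sumCongrHom_injective.comp (hf.prodMap hg))⟩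

end PermDegrees

namespace SubMulAction

variable (G Y : Type*) [Group G] [MulAction G Y]

def movedPoints : SubMulAction G Y where
  carrier := (fixedPoints G Y)ᶜ
  smul_mem' g y hy hgy := hy fun k => by
    simpa [mul_smul] using hgy (g * k * g⁻¹)

variable {G Y} in
theorem mem_movedPoints_iff {y : Y} : y ∈ movedPoints G Y ↔ ∃ g : G, g • y ≠ y :=
  not_forall

instance [FaithfulSMul G Y] : FaithfulSMul G (movedPoints G Y) where
  eq_of_smul_eq_smul {g₁ g₂} h := eq_of_smul_eq_smul fun y => by
    by_cases hy : y ∈ fixedPoints G Y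
    · rw [hy g₁, hy g₂]
    · exact congrArg Subtype.val (h ⟨y, hy⟩)

end SubMulAction

open SubMulAction

section OrbitQuotient

variable {G H X : Type*} [Group G] [Group H] [MulAction G X] [MulAction H X]
  [SMulCommClass G H X]

instance : MulAction G (orbitRel.Quotient H X) where
  smul g := Quotient.map (g • ·) fun x y ⟨h, hxy⟩ => ⟨h, by rw [← hxy, smul_comm]⟩
  one_smul q := Quotient.inductionOn' q fun x => congrArg Quotient.mk'' (one_smul G x)
  mul_smul g₁ g₂ q := Quotient.inductionOn' q fun x => congrArg Quotient.mk'' (mul_smul g₁ g₂ x)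

theorem smul_orbitRel_mk (g : G) (x : X) :
    g • (Quotient.mk'' x : orbitRel.Quotient H X) = Quotient.mk'' (g • x) :=
  rfl

theorem smul_orbitRel_mk_eq_iff (hsep : ∀ (g : G) (h : H) (x : X), g • x = h • x → g • x = x)
    (g : G) (x : X) :
    g • (Quotient.mk'' x : orbitRel.Quotient H X) = Quotient.mk'' x ↔ g • x = x := by
  rw [smul_orbitRel_mk, Quotient.eq'', orbitRel_apply]
  exact ⟨fun ⟨h, hx⟩ => hsep g h x hx.symm, fun hx => by rw [hx]; exact mem_orbit_self x⟩

theorem orbitRel_mk_mem_movedPoints_iff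
    (hsep : ∀ (g : G) (h : H) (x : X), g • x = h • x → g • x = x) (x : X) :
    (Quotient.mk'' x : orbitRel.Quotient H X) ∈ movedPoints G (orbitRel.Quotient H X) ↔
      x ∈ movedPoints G X :=
  not_congr <| forall_congr' fun g => smul_orbitRel_mk_eq_iff hsep g x

theorem faithfulSMul_orbitRel_quotient [FaithfulSMul G X]
    (hsep : ∀ (g : G) (h : H) (x : X), g • x = h • x → g • x = x) :
    FaithfulSMul G (orbitRel.Quotient H X) where
  eq_of_smul_eq_smul {g₁ g₂} h := eq_of_smul_eq_smul fun x => by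
    have hfix : (g₂⁻¹ * g₁) • (Quotient.mk'' x : orbitRel.Quotient H X) = Quotient.mk'' x := by
      rw [mul_smul, h, inv_smul_smul]
    rwa [smul_orbitRel_mk_eq_iff hsep, mul_smul, inv_smul_eq_iff] at hfix

end OrbitQuotient

theorem sum_comp_div_ncard_fiber {α β K : Type*} [Fintype α] [Fintype β] [Semifield K]
    [CharZero K] {f : α → β} (hf : Function.Surjective f) (w : β → K) :
    ∑ x, w (f x) / {y | f y = f x}.ncard = ∑ b, w b := by
  classical
  rw [← Finset.sum_fiberwise univ f]
  refine sum_congr rfl fun b _ => ?_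
  have hcard : {y | f y = b}.ncard = #{y | f y = b} := by
    rw [Set.ncard_eq_toFinset_card']
    simp
  have hpos : (#{y | f y = b} : K) ≠ 0 := by
    obtain ⟨x, rfl⟩ := hf b
    exact Nat.cast_ne_zero.mpr (card_ne_zero_of_mem (mem_filter.mpr ⟨mem_univ x, rfl⟩))
  calc ∑ x with f x = b, w (f x) / {y | f y = f x}.ncard
      = ∑ x with f x = b, w b / #{y | f y = b} :=
        sum_congr rfl fun x hx => by rw [(mem_filter.mp hx).2, hcard]
    _ = w b := by rw [sum_const, nsmul_eq_mul, mul_div_cancel₀ _ hpos]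

section OrbitWeights

variable {G X : Type*} [Group G] [MulAction G X] [Finite X]

theorem inv_ncard_orbit_le_one (x : X) : ((orbit G x).ncard : ℚ)⁻¹ ≤ 1 :=
  inv_le_one_of_one_le₀ <| by exact_mod_cast (Set.ncard_pos).mpr ⟨x, mem_orbit_self x⟩

theorem inv_ncard_orbit_le_half {x : X} (hx : x ∈ movedPoints G X) :
    ((orbit G x).ncard : ℚ)⁻¹ ≤ 2⁻¹ := by
  obtain ⟨g, hg⟩ := mem_movedPoints_iff.mp hx
  have : 1 < (orbit G x).ncard := Set.one_lt_ncard_iff_nontrivial.mpr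
    ⟨x, mem_orbit_self x, g • x, mem_orbit x g, hg.symm⟩
  rw [inv_le_inv₀ (by positivity) (by positivity)]
  exact_mod_cast this

end OrbitWeights

theorem sum_indicator_inv_ncard_orbit_add_le {G H X : Type*} [Group G] [Group H]
    [MulAction G X] [MulAction H X] [Fintype X] :
    ∑ x, ((movedPoints G X : Set X).indicator (fun x => ((orbit H x).ncard : ℚ)⁻¹) x +
      (movedPoints H X : Set X).indicator (fun x => ((orbit G x).ncard : ℚ)⁻¹) x) ≤
      Fintype.card X := by
  rw [Fintype.card_eq_sum_ones, Nat.cast_sum]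
  refine sum_le_sum fun x _ => ?_
  have hG := inv_ncard_orbit_le_one (G := G) x
  have hH := inv_ncard_orbit_le_one (G := H) x
  rw [Nat.cast_one]
  by_cases hxG : x ∈ (movedPoints G X : Set X) <;> by_cases hxH : x ∈ (movedPoints H X : Set X)
  · rw [Set.indicator_of_mem hxG, Set.indicator_of_mem hxH]
    linarith [inv_ncard_orbit_le_half hxG, inv_ncard_orbit_le_half hxH]
  all_goals simp [hxG, hxH, hG, hH]

section OrbitCounting

variable {G H X : Type*} [Group G] [Group H] [MulAction G X] [MulAction H X]
  [SMulCommClass G H X]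

theorem natCard_movedPoints_orbitRel_quotient_eq_sum [Fintype X]
    (hsep : ∀ (g : G) (h : H) (x : X), g • x = h • x → g • x = x) :
    (Nat.card (movedPoints G (orbitRel.Quotient H X)) : ℚ) =
      ∑ x, (movedPoints G X : Set X).indicator (fun x => ((orbit H x).ncard : ℚ)⁻¹) x := by
  classical
  rw [Nat.card_eq_fintype_card, Fintype.card_subtype, card_filter, Nat.cast_sum,
    ← sum_comp_div_ncard_fiber Quotient.mk''_surjective]
  refine sum_congr rfl fun x _ => ?_
  have hfiber : {y | (Quotient.mk'' y : orbitRel.Quotient H X) = Quotient.mk'' x} = orbit H x :=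
    Set.ext fun y => Quotient.eq''
  rw [hfiber, Set.indicator_apply, SetLike.mem_coe, orbitRel_mk_mem_movedPoints_iff hsep]
  split_ifs <;> simp

theorem exists_mem_permDegrees_add_le_natCard [Finite X] [FaithfulSMul G X] [FaithfulSMul H X]
    (hsep : ∀ (g : G) (h : H) (x : X), g • x = h • x → g • x = x) :
    ∃ m ∈ permDegrees G, ∃ n ∈ permDegrees H, m + n ≤ Nat.card X := by
  have := Fintype.ofFinite X
  have := SMulCommClass.symm G H X
  have hsep' : ∀ (h : H) (g : G) (x : X), h • x = g • x → h • x = x :=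
    fun h g x hx => hx.trans (hsep g h x hx.symm)
  have := faithfulSMul_orbitRel_quotient hsep
  have := faithfulSMul_orbitRel_quotient hsep'
  refine ⟨_, natCard_mem_permDegrees (movedPoints G (orbitRel.Quotient H X)),
    _, natCard_mem_permDegrees (movedPoints H (orbitRel.Quotient G X)), ?_⟩
  have := sum_indicator_inv_ncard_orbit_add_le (G := G) (H := H) (X := X)
  rw [sum_add_distrib, ← natCard_movedPoints_orbitRel_quotient_eq_sum hsep,
    ← natCard_movedPoints_orbitRel_quotient_eq_sum hsep', ← Nat.card_eq_fintype_card] at this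
  exact_mod_cast this

end OrbitCounting

theorem Prod.mk_one_mem_zpowers_of_coprime {G H : Type*} [Group G] [Group H] [Finite G]
    [Finite H] (hcop : (Nat.card G).Coprime (Nat.card H)) (g : G) (h : H) :
    ((g, 1) : G × H) ∈ Subgroup.zpowers (g, h) := by
  -- Bézout: `|G| u + |H| v = 1`, so `(g, h) ^ (|H| v) = (g, 1)`.
  have hbez := Nat.gcd_eq_gcd_ab (Nat.card G) (Nat.card H)
  rw [hcop.gcd_eq_one, Nat.cast_one] at hbez
  set u := Nat.gcdA (Nat.card G) (Nat.card H)
  set v := Nat.gcdB (Nat.card G) (Nat.card H)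
  refine Subgroup.mem_zpowers_iff.mpr ⟨Nat.card H * v, Prod.ext ?_ ?_⟩
  · rw [Prod.pow_fst, show (Nat.card H : ℤ) * v = 1 - Nat.card G * u by linarith, zpow_sub,
      zpow_one, zpow_mul, zpow_natCast, pow_card_eq_one', one_zpow, inv_one, mul_one]
  · rw [Prod.pow_snd, zpow_mul, zpow_natCast, pow_card_eq_one', one_zpow]

theorem exists_mem_permDegrees_add_le_natCard_of_coprime {G H X : Type*} [Group G] [Group H]
    [Finite G] [Finite H] [MulAction (G × H) X] [FaithfulSMul (G × H) X] [Finite X]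
    (hcop : (Nat.card G).Coprime (Nat.card H)) :
    ∃ m ∈ permDegrees G, ∃ n ∈ permDegrees H, m + n ≤ Nat.card X := by
  let _ : MulAction G X := MulAction.compHom X (MonoidHom.inl G H)
  let _ : MulAction H X := MulAction.compHom X (MonoidHom.inr G H)
  have : SMulCommClass G H X := ⟨fun g h x => by
    change ((g, 1) : G × H) • ((1, h) : G × H) • x = ((1, h) : G × H) • ((g, 1) : G × H) • x
    rw [← mul_smul, ← mul_smul, Prod.mk_mul_mk, Prod.mk_mul_mk, mul_one, one_mul, mul_one,
      one_mul]⟩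
  have : FaithfulSMul G X :=
    ⟨fun hg => congrArg Prod.fst (eq_of_smul_eq_smul (M := G × H) hg)⟩
  have : FaithfulSMul H X :=
    ⟨fun hh => congrArg Prod.snd (eq_of_smul_eq_smul (M := G × H) hh)⟩
  refine exists_mem_permDegrees_add_le_natCard fun g h x hx => ?_
  have hfix : ((g, h⁻¹) : G × H) ∈ stabilizer (G × H) x := by
    change ((g, h⁻¹) : G × H) • x = x
    rw [show ((g, h⁻¹) : G × H) = (1, h)⁻¹ * (g, 1) by simp, mul_smul, inv_smul_eq_iff]
    exact hx
  exact Subgroup.zpowers_le.mpr hfix (Prod.mk_one_mem_zpowers_of_coprime hcop g h⁻¹)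

theorem mu_prod_eq_of_coprime (G H : Type*) [Group G] [Group H] [Finite G] [Finite H]
    (hcop : Nat.Coprime (Nat.card G) (Nat.card H)) (a b c : ℕ)
    (ha : IsLeast {n : ℕ | ∃ f : G →* Equiv.Perm (Fin n), Function.Injective f} a)
    (hb : IsLeast {n : ℕ | ∃ f : H →* Equiv.Perm (Fin n), Function.Injective f} b)
    (hc : IsLeast {n : ℕ | ∃ f : G × H →* Equiv.Perm (Fin n), Function.Injective f} c) :
    c = a + b := by
  obtain ⟨f, hf⟩ := hc.1
  let _ : MulAction (G × H) (Fin c) := MulAction.compHom (Fin c) f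
  have : FaithfulSMul (G × H) (Fin c) := ⟨fun h => hf (Equiv.ext h)⟩
  obtain ⟨m, hm, n, hn, hmn⟩ := exists_mem_permDegrees_add_le_natCard_of_coprime (X := Fin c) hcop
  have hle : c ≤ a + b := hc.2 (add_mem_permDegrees_prod ha.1 hb.1)
  have ham : a ≤ m := ha.2 hm
  have hbn : b ≤ n := hb.2 hn
  rw [Nat.card_fin] at hmn
  omega
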